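/- Let n ≥ 2 and let S_n(Sym_n) be the monoid presented by generators x_1,…,x_n and relations x_{σ(1)}x_{σ(2)}⋯x_{σ(n)} = x_1x_2⋯x_n for all σ ∈ Sym_n. Then for every k ≥ 2 and all indices i_1,…,i_k with 2 ≤ i_1,…,i_k ≤ n, the identity x_ε·x_{i_1}x_{i_2}⋯x_{i_k} = x_ε·x_{j_1}x_{j_2}⋯x_{j_k} holds in S_n(Sym_n), where (j_1,…,j_k) is the nondecreasing rearrangement of (i_1,…,i_k) and x_ε = x_1x_2⋯x_n. -/

import Mathlib

/-- The word `x_{σ(1)} x_{σ(2)} ⋯ x_{σ(n)}` in the free monoid on `n` generators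
(generator `x_j` is indexed by `j-1 : Fin n`). -/
def permWord {n : ℕ} (σ : Equiv.Perm (Fin n)) : FreeMonoid (Fin n) :=
  FreeMonoid.ofList (List.ofFn fun i => σ i)

/-- The word `x_ε = x_1 x_2 ⋯ x_n`. -/
def epsWord (n : ℕ) : FreeMonoid (Fin n) :=
  FreeMonoid.ofList (List.ofFn fun i : Fin n => i)

/-- The defining relations `x_{σ(1)} ⋯ x_{σ(n)} = x_1 ⋯ x_n`, `σ ∈ Sym_n`. -/
def symRel (n : ℕ) : FreeMonoid (Fin n) → FreeMonoid (Fin n) → Prop :=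
  fun a b => ∃ σ : Equiv.Perm (Fin n), a = permWord σ ∧ b = epsWord n

/-- The canonical projection from the free monoid onto `S_n(Sym_n)`. -/
def proj (n : ℕ) : FreeMonoid (Fin n) →* PresentedMonoid (symRel n) :=
  PresentedMonoid.mk (symRel n)

/-- `u` contains a subword of the form `x_{σ(1)} ⋯ x_{σ(n)}` for some `σ ∈ Sym_n`. -/
def HasPermSubword {n : ℕ} (u : FreeMonoid (Fin n)) : Prop :=
  ∃ (σ : Equiv.Perm (Fin n)) (a b : FreeMonoid (Fin n)), u = a * permWord σ * b

/-- The word `x_1^{m_1} · x_ε · x_2^{m_2} ⋯ x_n^{m_n}` (0-indexed: `m i` is the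
exponent of generator `i`). -/
def normalWord (n : ℕ) (h : 0 < n) (m : Fin n → ℕ) : FreeMonoid (Fin n) :=
  FreeMonoid.ofList (List.replicate (m ⟨0, h⟩) ⟨0, h⟩) * epsWord n *
    FreeMonoid.ofList (((List.finRange n).drop 1).flatMap fun i => List.replicate (m i) i)

/-!
Every arrangement of all `n` generators represents `x_ε`. So if `u v` is such an arrangement
and `u'` rearranges `u`, then `x_ε u' = (u v) u' = u (v u') = u x_ε`, because `v u'` is again
an arrangement of all generators. With `u' = u` this makes `x_ε` commute with each generator,
and with `u = a b`, `u' = b a` it gives `x_ε a b = x_ε b a`; these two facts let any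
rearrangement of a word be carried out behind `x_ε`.
-/

section

variable {n : ℕ}

lemma proj_permWord (σ : Equiv.Perm (Fin n)) : proj n (permWord σ) = proj n (epsWord n) :=
  (Con.eq _).mpr (ConGen.Rel.of _ _ ⟨σ, rfl, rfl⟩)

lemma proj_ofList_append (u v : List (Fin n)) :
    proj n (FreeMonoid.ofList (u ++ v)) =
      proj n (FreeMonoid.ofList u) * proj n (FreeMonoid.ofList v) := by
  rw [FreeMonoid.ofList_append, map_mul]

lemma proj_ofList_of_perm_finRange {w : List (Fin n)} (hw : w.Perm (List.finRange n)) :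
    proj n (FreeMonoid.ofList w) = proj n (epsWord n) := by
  have hlen : w.length = n := by simpa using hw.length_eq
  let σ : Equiv.Perm (Fin n) := (finCongr hlen.symm).trans
    (List.Nodup.getEquivOfForallMemList w (hw.nodup_iff.mpr (List.nodup_finRange n))
      fun a => hw.mem_iff.mpr (List.mem_finRange a))
  have hσ : permWord σ = FreeMonoid.ofList w := by
    refine congrArg FreeMonoid.ofList (List.ext_getElem (by simp [hlen]) fun i _ _ => ?_)
    simp [σ]
  rw [← hσ, proj_permWord]

lemma proj_epsWord_mul_of_perm {u u' : List (Fin n)} (hu : u.Nodup) (hperm : u'.Perm u) :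
    proj n (epsWord n) * proj n (FreeMonoid.ofList u') =
      proj n (FreeMonoid.ofList u) * proj n (epsWord n) := by
  let v := (List.finRange n).diff u
  have huv : (u ++ v).Perm (List.finRange n) :=
    List.subperm_append_diff_self_of_count_le <| List.subperm_ext_iff.mp <|
      hu.subperm fun a _ => List.mem_finRange a
  have hvu' : (v ++ u').Perm (List.finRange n) :=
    ((List.perm_append_left_iff v).mpr hperm).trans (List.perm_append_comm.trans huv)
  calc proj n (epsWord n) * proj n (FreeMonoid.ofList u')
      = proj n (FreeMonoid.ofList (u ++ v)) * proj n (FreeMonoid.ofList u') := by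
        rw [proj_ofList_of_perm_finRange huv]
    _ = proj n (FreeMonoid.ofList u) * proj n (FreeMonoid.ofList (v ++ u')) := by
        rw [proj_ofList_append, proj_ofList_append, mul_assoc]
    _ = proj n (FreeMonoid.ofList u) * proj n (epsWord n) := by
        rw [proj_ofList_of_perm_finRange hvu']

lemma proj_epsWord_mul_comm {u : List (Fin n)} (hu : u.Nodup) :
    proj n (epsWord n) * proj n (FreeMonoid.ofList u) =
      proj n (FreeMonoid.ofList u) * proj n (epsWord n) :=
  proj_epsWord_mul_of_perm hu (List.Perm.refl u)

lemma proj_epsWord_mul_cons (a : Fin n) (t : List (Fin n)) :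
    proj n (epsWord n) * proj n (FreeMonoid.ofList (a :: t)) =
      proj n (FreeMonoid.ofList [a]) * (proj n (epsWord n) * proj n (FreeMonoid.ofList t)) := by
  rw [← List.singleton_append, proj_ofList_append, ← mul_assoc,
    proj_epsWord_mul_comm (List.nodup_singleton a), mul_assoc]

lemma proj_epsWord_mul_swap (a b : Fin n) (t : List (Fin n)) :
    proj n (epsWord n) * proj n (FreeMonoid.ofList (a :: b :: t)) =
      proj n (epsWord n) * proj n (FreeMonoid.ofList (b :: a :: t)) := by
  suffices proj n (epsWord n) * proj n (FreeMonoid.ofList [a, b]) =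
      proj n (epsWord n) * proj n (FreeMonoid.ofList [b, a]) by
    rw [show a :: b :: t = [a, b] ++ t from rfl, show b :: a :: t = [b, a] ++ t from rfl,
      proj_ofList_append, proj_ofList_append, ← mul_assoc, ← mul_assoc, this]
  rcases eq_or_ne a b with rfl | hab
  · rfl
  have hu : [a, b].Nodup := by simpa using hab
  rw [proj_epsWord_mul_of_perm hu (List.Perm.swap a b []), proj_epsWord_mul_comm hu]

end

theorem eps_mul_sorted_general (n : ℕ) (l l' : List (Fin n))
    (hperm : l.Perm l') :
    proj n (epsWord n) * proj n (FreeMonoid.ofList l) =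
      proj n (epsWord n) * proj n (FreeMonoid.ofList l') := by
  induction hperm with
  | nil => rfl
  | cons a _ ih => rw [proj_epsWord_mul_cons, ih, proj_epsWord_mul_cons]
  | swap a b t => exact proj_epsWord_mul_swap b a t
  | trans _ _ ih₁ ih₂ => exact ih₁.trans ih₂

/-- For `k ≥ 2` indices `i_1, …, i_k` with `2 ≤ i_t ≤ n` (0-indexed: values ≠ 0),
`x_ε · x_{i_1} ⋯ x_{i_k} = x_ε · x_{j_1} ⋯ x_{j_k}` holds in `S_n(Sym_n)`, where
`(j_1, …, j_k)` is the nondecreasing rearrangement of `(i_1, …, i_k)`. -/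
theorem eps_mul_sorted (n : ℕ) (hn : 2 ≤ n) (l l' : List (Fin n))
    (hlen : 2 ≤ l.length) (hl : ∀ a ∈ l, a.val ≠ 0)
    (hperm : l.Perm l') (hsorted : l'.Pairwise (· ≤ ·)) :
    proj n (epsWord n) * proj n (FreeMonoid.ofList l) =
      proj n (epsWord n) * proj n (FreeMonoid.ofList l') :=
  eps_mul_sorted_general n l l' hperm
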